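/- arXiv:2004.12423 — 6 statements merged into one kernel-verified Lean document; each statement's English description precedes it below -/
import Mathlib

section
/- Let (X,F) be a symmetric n-ary band. Then for every x ∈ X the map ℓ_x is an endomorphism of (X,F), i.e., ℓ_x(F(x₁,…,xₙ)) = F(ℓ_x(x₁),…,ℓ_x(xₙ)) for all x₁,…,xₙ ∈ X. -/
/-!
Reading the `(2n-1)`-tuple `(x,…,x,x₁,…,xₙ)` once from the right and once from the left,
associativity gives `ℓ_x(F(x₁,…,xₙ)) = F(ℓ_x(x₁),x₂,…,xₙ)`, and by symmetry `ℓ_x` can be pushed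
onto any single argument of `F`. The same identity together with idempotency of `F` shows
`ℓ_x ∘ ℓ_x = ℓ_x`, so `ℓ_x` may be applied again and pushed onto a further argument, until it has
reached every argument.
-/

namespace NaryBand

variable {X : Type*}

/-- Replace the window of length `n` starting at position `i` (0-based) of the
`(2*n-1)`-tuple `x` by the value of `F` on that window. -/
def contract {n : ℕ} (F : (Fin n → X) → X) (i : ℕ) (hn : 2 ≤ n) (hi : i ≤ n - 1)
    (x : Fin (2 * n - 1) → X) : Fin n → X :=
  fun j =>
    if _h1 : (j : ℕ) < i then x ⟨(j : ℕ), by have := j.isLt; omega⟩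
    else if _h2 : (j : ℕ) = i then
      F (fun k => x ⟨i + (k : ℕ), by have := k.isLt; omega⟩)
    else x ⟨(j : ℕ) + n - 1, by have := j.isLt; omega⟩

/-- `F` is an associative `n`-ary operation. -/
def NAssoc {n : ℕ} (hn : 2 ≤ n) (F : (Fin n → X) → X) : Prop :=
  ∀ (i : ℕ) (hi : i + 1 ≤ n - 1) (x : Fin (2 * n - 1) → X),
    F (contract F i hn (by omega) x) = F (contract F (i + 1) hn (by omega) x)

/-- `F` is a symmetric `n`-ary operation. -/
def NSym {n : ℕ} (F : (Fin n → X) → X) : Prop :=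
  ∀ (σ : Equiv.Perm (Fin n)) (x : Fin n → X), F (x ∘ σ) = F x

/-- `F` is an idempotent `n`-ary operation. -/
def NIdem {n : ℕ} (F : (Fin n → X) → X) : Prop :=
  ∀ x : X, F (fun _ => x) = x

/-- The associated binary operation `B(x,y) = F(x,…,x,y)` (with `n-1` copies of `x`). -/
def assocB {n : ℕ} (F : (Fin n → X) → X) (x y : X) : X :=
  F (fun j => if (j : ℕ) < n - 1 then x else y)

/-- The map `ℓ_x : y ↦ B(x,y)`. -/
def ell {n : ℕ} (F : (Fin n → X) → X) (x : X) : X → X :=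
  fun y => assocB F x y

/-- The `n`-ary extension `G^{n-1}(x₁,…,xₙ) = G(x₁, G(x₂, …, G(x_{n-1}, xₙ)…))`
of a binary operation `G`. -/
def nExt {n : ℕ} (hn : 1 ≤ n) (G : X → X → X) (x : Fin n → X) : X :=
  (List.ofFn (fun i : Fin (n - 1) => x ⟨(i : ℕ), by have := i.isLt; omega⟩)).foldr G
    (x ⟨n - 1, by omega⟩)

/-- The relation `σ`: `x σ y` iff `B(x,y) = y` and `B(y,x) = x`. -/
def sigmaRel {n : ℕ} (F : (Fin n → X) → X) (x y : X) : Prop :=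
  assocB F x y = y ∧ assocB F y x = x

/-- `(A, mul)` is an abelian group with identity `e` and inversion `inv`. -/
def IsAbelianGroup {A : Type*} (mul : A → A → A) (e : A) (inv : A → A) : Prop :=
  (∀ a b c, mul (mul a b) c = mul a (mul b c)) ∧
  (∀ a b, mul a b = mul b a) ∧
  (∀ a, mul e a = a) ∧
  (∀ a, mul (inv a) a = e)

/-- `k`-fold product `a * ⋯ * a` with respect to `mul` (with `powMul mul e 0 a = e`). -/
def powMul {A : Type*} (mul : A → A → A) (e : A) : ℕ → A → A
  | 0, _ => e
  | k + 1, a => mul a (powMul mul e k a)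

end NaryBand

open Finset Function

section CommuteCoordinatewise

variable {ι Y : Type*} [DecidableEq ι] (f : Y → Y) (G : (ι → Y) → Y)

theorem map_apply_eq_apply_piecewise_of_update (hf : ∀ y, f (f y) = f y)
    (hG : ∀ xs k, f (G xs) = G (update xs k (f (xs k)))) (xs : ι → Y)
    {s : Finset ι} (hs : s.Nonempty) : f (G xs) = G (s.piecewise (f ∘ xs) xs) := by
  induction hs using Finset.Nonempty.cons_induction with
  | singleton k => rw [piecewise_singleton, hG xs k]; rfl
  | cons k s hk _ ih =>
    calc f (G xs) = f (G (s.piecewise (f ∘ xs) xs)) := by rw [← ih, hf]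
      _ = G (update (s.piecewise (f ∘ xs) xs) k (f (xs k))) := by
        rw [hG, piecewise_eq_of_notMem _ _ _ hk]
      _ = G ((cons k s hk).piecewise (f ∘ xs) xs) := by
        rw [cons_eq_insert, piecewise_insert]; rfl

theorem map_apply_eq_apply_comp_of_update [Fintype ι] [Nonempty ι] (hf : ∀ y, f (f y) = f y)
    (hG : ∀ xs k, f (G xs) = G (update xs k (f (xs k)))) (xs : ι → Y) :
    f (G xs) = G (f ∘ xs) := by
  rw [map_apply_eq_apply_piecewise_of_update f G hf hG xs univ_nonempty, piecewise_univ]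

end CommuteCoordinatewise

namespace NaryBand

variable {X : Type*} {n : ℕ} (hn : 2 ≤ n) (F : (Fin n → X) → X)

theorem apply_contract_eq_apply_contract_zero (hA : NAssoc hn F) (w : Fin (2 * n - 1) → X) :
    ∀ i (hi : i ≤ n - 1), F (contract F i hn hi w) = F (contract F 0 hn (Nat.zero_le _) w)
  | 0, _ => rfl
  | i + 1, hi => (hA i hi w).symm.trans (apply_contract_eq_apply_contract_zero hA w i (by omega))

theorem ell_apply_eq_update_zero (hA : NAssoc hn F) (x : X) (xs : Fin n → X) :
    ell F x (F xs) = F (update xs ⟨0, by omega⟩ (ell F x (xs ⟨0, by omega⟩))) := by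
  let w : Fin (2 * n - 1) → X := fun i =>
    if (i : ℕ) < n - 1 then x else xs ⟨i - (n - 1), by omega⟩
  have hlast : contract F (n - 1) hn le_rfl w =
      fun j : Fin n => if (j : ℕ) < n - 1 then x else F xs := by
    funext j
    have := j.isLt
    simp only [contract, w]
    split_ifs
    · rfl
    · congr 1; funext k; rw [if_neg (by omega)]; congr 1; ext; simp
    all_goals omega
  have hfirst : contract F 0 hn (Nat.zero_le _) w =
      update xs ⟨0, by omega⟩ (ell F x (xs ⟨0, by omega⟩)) := by
    funext j
    simp only [contract, w, update_apply, Fin.ext_iff, Nat.not_lt_zero, dite_false, zero_add]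
    split_ifs with hj hk
    · simp only [ell, assocB]
      congr 1
      funext k
      split_ifs
      · rfl
      · congr 1; ext; simp; omega
    · omega
    · congr 1; ext; simp; omega
  have := apply_contract_eq_apply_contract_zero hn F hA w (n - 1) le_rfl
  rwa [hlast, hfirst] at this

theorem ell_apply_eq_update (hA : NAssoc hn F) (hS : NSym F) (x : X) (xs : Fin n → X)
    (k : Fin n) : ell F x (F xs) = F (update xs k (ell F x (xs k))) := by
  let z : Fin n := ⟨0, by omega⟩
  let s := Equiv.swap z k
  have hupdate : update xs k (ell F x (xs k)) ∘ s = update (xs ∘ s) z (ell F x (xs k)) := by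
    rw [update_comp_equiv, Equiv.symm_swap, Equiv.swap_apply_right]
  calc ell F x (F xs) = ell F x (F (xs ∘ s)) := by rw [hS]
    _ = F (update (xs ∘ s) z (ell F x (xs (s z)))) := ell_apply_eq_update_zero hn F hA x (xs ∘ s)
    _ = F (update xs k (ell F x (xs k))) := by rw [Equiv.swap_apply_left, ← hupdate, hS]

theorem ell_self (hI : NIdem F) (x : X) : ell F x x = x := by
  simpa only [ell, assocB, ite_self] using hI x

theorem ell_ell (hA : NAssoc hn F) (hI : NIdem F) (x y : X) :
    ell F x (ell F x y) = ell F x y := by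
  set ws : Fin n → X := fun j => if (j : ℕ) < n - 1 then x else y
  have hy : ell F x y = F ws := rfl
  have h0 : ws ⟨0, by omega⟩ = x := if_pos (show 0 < n - 1 by omega)
  rw [hy, ell_apply_eq_update_zero hn F hA, h0, ell_self F hI, ← h0, update_eq_self]

end NaryBand

open NaryBand

/-- In a symmetric `n`-ary band, every `ℓ_x` is an endomorphism of `(X,F)`. -/
theorem stmt_1 {X : Type*} {n : ℕ} (hn : 2 ≤ n) (F : (Fin n → X) → X)
    (hA : NAssoc hn F) (hS : NSym F) (hI : NIdem F) :
    ∀ (x : X) (xs : Fin n → X),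
      ell F x (F xs) = F (fun i => ell F x (xs i)) := by
  have : NeZero n := ⟨by omega⟩
  intro x xs
  exact map_apply_eq_apply_comp_of_update (ell F x) F (ell_ell hn F hA hI x)
    (ell_apply_eq_update hn F hA hS x) xs
end

section
/- Let (X,F) be a symmetric n-ary band. Then for all x, y ∈ X one has ℓ_x ∘ ℓ_y = ℓ_y ∘ ℓ_x = ℓ_{ℓ_x(y)} = ℓ_{ℓ_y(x)}. -/
/-!
Evaluating `F` twice on a word of length `2n - 1` gives the same result wherever the inner
application sits, so by symmetry of `F` this value is invariant under permutations inside either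
of the windows `[0, n)` and `[n - 1, 2n - 1)`; as the two windows overlap, it is invariant under
all permutations of the word. Since `ℓ_u (ℓ_v z)` is its value on `u^{n-1} v^{n-1} z`, the maps
`ℓ_u` and `ℓ_v` commute, and by idempotency `ℓ_u ∘ ℓ_u = ℓ_u`. For `w = ℓ_x y`, trading one `w`
for the letters `x^{n-1} y` it stands for gives
`F(w^{k+1}, y^{n-2-k}, z) = ℓ_x F(w^k, y^{n-1-k}, z)`, hence
`ℓ_w z = ℓ_x^{n-1} (ℓ_y z) = ℓ_x (ℓ_y z)`.
-/

namespace NaryBand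

variable {X : Type*} {n : ℕ}

def listApply {m : ℕ} (G : (Fin m → X) → X) (L : List X) (h : L.length = m) : X :=
  G fun j => L[j.1]

theorem listApply_eq_of_perm {m : ℕ} {G : (Fin m → X) → X} (hG : NSym G) {L L' : List X}
    (hLL' : L.Perm L') (h : L.length = m) (h' : L'.length = m) :
    listApply G L h = listApply G L' h' := by
  classical
  let e : Fin m ≃ Fin m := (finCongr h.symm).trans
    ((Equiv.ofBijective hLL'.idxBij ⟨hLL'.idxBij_injective, hLL'.idxBij_surjective⟩).trans
      (finCongr h'))
  have he : (fun j : Fin m => L'[j.1]) ∘ e = fun j => L[j.1] := by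
    funext j
    exact hLL'.getElem_idxBij_eq_getElem (Fin.cast h.symm j)
  rw [listApply, listApply, ← he, hG]

theorem listApply_replicate {m : ℕ} (G : (Fin m → X) → X) (x : X) :
    listApply G (List.replicate m x) List.length_replicate = G fun _ => x := by
  simp [listApply]

def wordValue (hn : 2 ≤ n) (F : (Fin n → X) → X) (t : Fin (2 * n - 1) → X) : X :=
  F (contract F 0 hn (Nat.zero_le _) t)

section

variable {hn : 2 ≤ n} {F : (Fin n → X) → X}

theorem wordValue_eq_contract (hA : NAssoc hn F) (i : ℕ) (hi : i ≤ n - 1)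
    (t : Fin (2 * n - 1) → X) : wordValue hn F t = F (contract F i hn hi t) := by
  induction i with
  | zero => rfl
  | succ i ih => exact (ih (by omega)).trans (hA i hi t)

theorem wordValue_comp_swap_of_window (hA : NAssoc hn F) (hS : NSym F) {i : ℕ}
    (hi : i ≤ n - 1) {a b : Fin (2 * n - 1)} (ha : i ≤ a ∧ a < i + n) (hb : i ≤ b ∧ b < i + n)
    (t : Fin (2 * n - 1) → X) : wordValue hn F (t ∘ Equiv.swap a b) = wordValue hn F t := by
  rw [wordValue_eq_contract hA i hi, wordValue_eq_contract hA i hi]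
  congr 1
  funext j
  unfold contract
  split_ifs with h₁ h₂
  · rw [Function.comp_apply, Equiv.swap_apply_of_ne_of_ne] <;>
      simp only [ne_eq, Fin.ext_iff] <;> omega
  · let e : Fin n → Fin (2 * n - 1) := fun k => ⟨i + k, by omega⟩
    have he : Function.Injective e := fun k l hkl => by
      simp only [e, Fin.ext_iff] at hkl ⊢; omega
    have hea : e ⟨a - i, by omega⟩ = a := Fin.ext (by simp only [e]; omega)
    have heb : e ⟨b - i, by omega⟩ = b := Fin.ext (by simp only [e]; omega)
    change F (fun k => t (Equiv.swap a b (e k))) = F (t ∘ e)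
    rw [← hea, ← heb]
    simp only [he.swap_apply]
    exact hS _ (t ∘ e)
  · rw [Function.comp_apply, Equiv.swap_apply_of_ne_of_ne] <;>
      simp only [ne_eq, Fin.ext_iff] <;> omega

theorem wordValue_comp_swap (hA : NAssoc hn F) (hS : NSym F) (a b : Fin (2 * n - 1))
    (t : Fin (2 * n - 1) → X) : wordValue hn F (t ∘ Equiv.swap a b) = wordValue hn F t := by
  have left {a b : Fin (2 * n - 1)} (ha : a < n) (hb : b < n) (t : Fin (2 * n - 1) → X) :=
    wordValue_comp_swap_of_window hA hS (Nat.zero_le _) ⟨Nat.zero_le a, by omega⟩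
      ⟨Nat.zero_le b, by omega⟩ t
  have right {a b : Fin (2 * n - 1)} (ha : n - 1 ≤ a) (hb : n - 1 ≤ b)
      (t : Fin (2 * n - 1) → X) :=
    wordValue_comp_swap_of_window hA hS le_rfl ⟨ha, by omega⟩ ⟨hb, by omega⟩ t
  wlog hab : a ≤ b generalizing a b
  · rw [Equiv.swap_comm]; exact this b a (by omega)
  by_cases hb : b < n
  · exact left (by omega) hb t
  by_cases ha : n - 1 ≤ a
  · exact right ha (by omega) t
  -- `a` and `b` lie in different windows: conjugate through the position `n - 1` they share
  obtain ⟨c, hc⟩ : ∃ c : Fin (2 * n - 1), (c : ℕ) = n - 1 := ⟨⟨n - 1, by omega⟩, rfl⟩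
  rw [← Equiv.swap_mul_swap_mul_swap (x := b) (y := c) (z := a)
    (by simp only [ne_eq, Fin.ext_iff]; omega) (by simp only [ne_eq, Fin.ext_iff]; omega)]
  simp only [Equiv.Perm.coe_mul, ← Function.comp_assoc]
  rw [left (by omega) (by omega), right (by omega) (by omega), left (by omega) (by omega)]

theorem wordValue_nsym (hA : NAssoc hn F) (hS : NSym F) : NSym (wordValue hn F) := by
  intro σ
  induction σ using Equiv.Perm.swap_induction_on with
  | one => intro t; rfl
  | swap_mul σ a b _ ih =>
    intro t
    rw [Equiv.Perm.coe_mul, ← Function.comp_assoc, ih, wordValue_comp_swap hA hS]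

theorem wordValue_append_eq_listApply (hA : NAssoc hn F) (A M C : List X) (hM : M.length = n)
    (hAC : A.length + C.length = n - 1) :
    listApply (wordValue hn F) (A ++ M ++ C) (by simp only [List.length_append]; omega) =
      listApply F (A ++ listApply F M hM :: C)
        (by simp only [List.length_append, List.length_cons]; omega) := by
  unfold listApply
  rw [wordValue_eq_contract hA A.length (by omega)]
  congr 1
  funext j
  unfold contract
  split_ifs with h₁ h₂
  · simp [List.getElem_append_left, h₁]
  · simp [h₂, hM]
  · have hj : (j : ℕ) - A.length = (j + n - 1 - A.length - M.length) + 1 := by omega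
    dsimp only
    rw [List.getElem_append_right (by simp only [List.length_append]; omega),
      List.getElem_append_right (by omega)]
    simp only [List.getElem_cons_succ, hj, List.length_append]
    congr 1
    omega

end

theorem ell_eq_listApply (hn : 0 < n) (F : (Fin n → X) → X) (x y : X) :
    ell F x y = listApply F (List.replicate (n - 1) x ++ [y]) (by simp; omega) := by
  unfold ell assocB listApply
  congr 1
  funext j
  split_ifs with hj
  · rw [List.getElem_append_left (by simpa using hj), List.getElem_replicate]
  · rw [List.getElem_append_right (by simp; omega)]
    simp

section

variable {hn : 2 ≤ n} {F : (Fin n → X) → X}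

theorem ell_ell_eq_wordValue (hA : NAssoc hn F) (u v z : X) :
    ell F u (ell F v z) = listApply (wordValue hn F)
      (List.replicate (n - 1) u ++ List.replicate (n - 1) v ++ [z]) (by simp; omega) := by
  have h := wordValue_append_eq_listApply hA (List.replicate (n - 1) u)
    (List.replicate (n - 1) v ++ [z]) [] (by simp; omega) (by simp)
  rw [ell_eq_listApply (by omega) F v, ell_eq_listApply (by omega) F u]
  simpa using h.symm

theorem ell_left_comm (hA : NAssoc hn F) (hS : NSym F) (u v z : X) :
    ell F u (ell F v z) = ell F v (ell F u z) := by
  rw [ell_ell_eq_wordValue hA, ell_ell_eq_wordValue hA]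
  exact listApply_eq_of_perm (wordValue_nsym hA hS) (List.perm_append_comm.append_right [z]) _ _

theorem ell_ell_self (hA : NAssoc hn F) (hI : NIdem F) (u z : X) :
    ell F u (ell F u z) = ell F u z := by
  have h := wordValue_append_eq_listApply hA [] (List.replicate n u)
    (List.replicate (n - 2) u ++ [z]) (by simp) (by simp; omega)
  have hsplit : List.replicate (n - 1) u ++ List.replicate (n - 1) u ++ [z] =
      List.replicate n u ++ (List.replicate (n - 2) u ++ [z]) := by
    rw [← List.append_assoc, ← List.replicate_add, ← List.replicate_add]
    congr 2
    omega
  have hcons : u :: (List.replicate (n - 2) u ++ [z]) = List.replicate (n - 1) u ++ [z] := by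
    rw [← List.cons_append, ← List.replicate_succ]
    congr 2
    omega
  simp only [List.nil_append, listApply_replicate, hI u, hcons] at h
  rw [ell_ell_eq_wordValue hA]
  simp only [hsplit]
  rw [h, ell_eq_listApply (by omega)]

theorem listApply_replicate_ell_succ (hA : NAssoc hn F) (hS : NSym F) (x y z : X) {k m : ℕ}
    (hkm : k + m + 2 = n) :
    listApply F (List.replicate (k + 1) (ell F x y) ++ List.replicate m y ++ [z])
        (by simp; omega) =
      ell F x (listApply F (List.replicate k (ell F x y) ++ List.replicate (m + 1) y ++ [z])
        (by simp; omega)) := by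
  have hF := wordValue_append_eq_listApply hA (List.replicate k (ell F x y))
    (List.replicate (n - 1) x ++ [y]) (List.replicate m y ++ [z]) (by simp; omega)
    (by simp; omega)
  have hG := wordValue_append_eq_listApply hA (List.replicate (n - 1) x)
    (List.replicate k (ell F x y) ++ List.replicate (m + 1) y ++ [z]) [] (by simp; omega)
    (by simp)
  rw [← ell_eq_listApply (by omega)] at hF hG
  have hperm : List.Perm
      (List.replicate k (ell F x y) ++ (List.replicate (n - 1) x ++ [y]) ++
        (List.replicate m y ++ [z]))
      (List.replicate (n - 1) x ++
        (List.replicate k (ell F x y) ++ List.replicate (m + 1) y ++ [z]) ++ []) := by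
    simp only [List.append_assoc, List.append_nil, List.replicate_succ,
      List.cons_append]
    exact List.perm_append_comm_assoc _ _ _
  calc _ = listApply F (List.replicate k (ell F x y) ++ ell F x y :: (List.replicate m y ++ [z]))
          (by simp; omega) := by
        simp only [List.replicate_succ', List.append_assoc, List.cons_append, List.nil_append]
    _ = _ := hF.symm
    _ = _ := listApply_eq_of_perm (wordValue_nsym hA hS) hperm _ _
    _ = _ := hG

theorem ell_assoc (hA : NAssoc hn F) (hS : NSym F) (hI : NIdem F) (x y z : X) :
    ell F (ell F x y) z = ell F x (ell F y z) := by
  have key : ∀ k m, (hkm : k + m + 2 = n) →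
      listApply F (List.replicate (k + 1) (ell F x y) ++ List.replicate m y ++ [z])
        (by simp; omega) = ell F x (ell F y z) := by
    intro k
    induction k with
    | zero =>
      intro m hm
      rw [listApply_replicate_ell_succ hA hS x y z hm, ell_eq_listApply (by omega) F y]
      simp only [List.replicate_zero, List.nil_append, show m + 1 = n - 1 by omega]
    | succ k ih =>
      intro m hm
      rw [listApply_replicate_ell_succ hA hS x y z hm, ih (m + 1) (by omega), ell_ell_self hA hI]
  rw [ell_eq_listApply (by omega), ← key (n - 2) 0 (by omega)]
  simp only [List.replicate_zero, List.append_nil, show n - 2 + 1 = n - 1 by omega]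

end

end NaryBand

open NaryBand

/-- In a symmetric `n`-ary band,
`ℓ_x ∘ ℓ_y = ℓ_y ∘ ℓ_x = ℓ_{ℓ_x(y)} = ℓ_{ℓ_y(x)}`. -/
theorem stmt_3 {X : Type*} {n : ℕ} (hn : 2 ≤ n) (F : (Fin n → X) → X)
    (hA : NAssoc hn F) (hS : NSym F) (hI : NIdem F) :
    ∀ x y : X,
      ell F x ∘ ell F y = ell F y ∘ ell F x ∧
      ell F x ∘ ell F y = ell F (ell F x y) ∧
      ell F x ∘ ell F y = ell F (ell F y x) := by
  intro x y
  have hcomm : ell F x ∘ ell F y = ell F y ∘ ell F x := funext (ell_left_comm hA hS x y)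
  refine ⟨hcomm, funext fun z => (ell_assoc hA hS hI x y z).symm, ?_⟩
  rw [hcomm]
  exact funext fun z => (ell_assoc hA hS hI y x z).symm
end

section
/- Let (X,F) be a symmetric n-ary band and B its associated binary operation. Then (X,B) is a right normal band: B is associative, B(x,x) = x for all x ∈ X, and B(B(x,y),z) = B(B(y,x),z) for all x, y, z ∈ X. -/
/-!
On `(2n-1)`-tuples put `nest u = F (F (u₀, …, u_{n-1}), u_n, …, u_{2n-2})`. Associativity lets the
inner window slide to any of the positions `0, …, n-1`, and symmetry of `F` permutes the entries of
a window; the windows at `0` and at `n-1` share the position `n-1`, so transpositions through it, and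
hence all permutations, leave `nest` unchanged.

Both `B(x, B(y,z))` and `B(B(x,y), z)` equal `nest (x^{n-1} y^{n-1} z)`. For the right-nested
product this is a regrouping. For the left-nested one, regrouping gives `F(a, y^{n-2}, z)` with
`a = B(x,y)`, and then the `y`'s are traded for `a`'s one at a time by `F(a, a, …) = F(y, a, …)`.
Right normality follows because `nest (x^{n-1} y^{n-1} z)` is symmetric in `x` and `y`.
-/

namespace NaryBand

variable {X : Type*} {n : ℕ} {F : (Fin n → X) → X}

def nest (hn : 2 ≤ n) (F : (Fin n → X) → X) (u : Fin (2 * n - 1) → X) : X :=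
  F (contract F 0 hn (Nat.zero_le _) u)

theorem nest_eq_F_contract {hn : 2 ≤ n} (hA : NAssoc hn F) (u : Fin (2 * n - 1) → X) :
    ∀ (i : ℕ) (hi : i ≤ n - 1), nest hn F u = F (contract F i hn hi u)
  | 0, _ => rfl
  | i + 1, hi => (nest_eq_F_contract hA u i (by omega)).trans (hA i hi u)

theorem F_contract_comp_swap (hn : 2 ≤ n) (hS : NSym F) {i : ℕ} (hi : i ≤ n - 1)
    (u : Fin (2 * n - 1) → X) {a b : Fin (2 * n - 1)}
    (ha : i ≤ a ∧ (a : ℕ) < i + n) (hb : i ≤ b ∧ (b : ℕ) < i + n) :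
    F (contract F i hn hi (u ∘ Equiv.swap a b)) = F (contract F i hn hi u) := by
  have hout : ∀ p : Fin (2 * n - 1), ((p : ℕ) < i ∨ i + n ≤ p) → u (Equiv.swap a b p) = u p :=
    fun p hp => congrArg u (Equiv.swap_apply_of_ne_of_ne (Fin.ne_of_val_ne (by omega))
      (Fin.ne_of_val_ne (by omega)))
  set w : Fin n → Fin (2 * n - 1) := fun k => ⟨i + k, by omega⟩
  have hw : Function.Injective w := fun k l h => Fin.ext (by simpa [w] using h)
  obtain ⟨c, hc⟩ : ∃ c, w c = a := ⟨⟨a - i, by omega⟩, Fin.ext (by simp [w]; omega)⟩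
  obtain ⟨d, hd⟩ : ∃ d, w d = b := ⟨⟨b - i, by omega⟩, Fin.ext (by simp [w]; omega)⟩
  congr 1
  funext j
  simp only [contract]
  split_ifs with h1 h2
  · exact hout _ (Or.inl h1)
  · show F (u ∘ Equiv.swap a b ∘ w) = F (u ∘ w)
    rw [← hc, ← hd, hw.swap_comp c d, ← Function.comp_assoc, hS]
  · exact hout _ (Or.inr (by simp only; omega))

theorem nest_comp_swap_mid {hn : 2 ≤ n} (hA : NAssoc hn F) (hS : NSym F)
    (u : Fin (2 * n - 1) → X) (b : Fin (2 * n - 1)) :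
    nest hn F (u ∘ Equiv.swap ⟨n - 1, by omega⟩ b) = nest hn F u := by
  rcases le_total (b : ℕ) (n - 1) with hb | hb
  · exact F_contract_comp_swap hn hS _ u (by simp; omega) (by omega)
  · rw [nest_eq_F_contract hA _ (n - 1) le_rfl, nest_eq_F_contract hA _ (n - 1) le_rfl]
    exact F_contract_comp_swap hn hS _ u (by simp; omega) (by omega)

theorem nest_comp_swap {hn : 2 ≤ n} (hA : NAssoc hn F) (hS : NSym F)
    (u : Fin (2 * n - 1) → X) (a b : Fin (2 * n - 1)) :
    nest hn F (u ∘ Equiv.swap a b) = nest hn F u := by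
  set m : Fin (2 * n - 1) := ⟨n - 1, by omega⟩
  by_cases ham : a = m
  · rw [ham]
    exact nest_comp_swap_mid hA hS u b
  by_cases hab : a = b
  · rw [hab, Equiv.swap_self, Equiv.coe_refl, Function.comp_id]
  rw [Equiv.swap_comm, ← Equiv.swap_mul_swap_mul_swap ham hab]
  change nest hn F (((u ∘ Equiv.swap m b) ∘ Equiv.swap a m) ∘ Equiv.swap m b) = _
  rw [nest_comp_swap_mid hA hS, Equiv.swap_comm a m, nest_comp_swap_mid hA hS,
    nest_comp_swap_mid hA hS]

theorem nest_comp_perm {hn : 2 ≤ n} (hA : NAssoc hn F) (hS : NSym F)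
    (σ : Equiv.Perm (Fin (2 * n - 1))) (u : Fin (2 * n - 1) → X) :
    nest hn F (u ∘ σ) = nest hn F u := by
  induction σ using Equiv.Perm.swap_induction_on generalizing u with
  | one => rfl
  | swap_mul σ a b _ ih =>
    change nest hn F ((u ∘ Equiv.swap a b) ∘ σ) = _
    rw [ih, nest_comp_swap hA hS]

def blocks {m : ℕ} (k l : ℕ) (x y z : X) : Fin m → X :=
  fun j => if (j : ℕ) < k then x else if (j : ℕ) < l then y else z

theorem assocB_self (hI : NIdem F) (x : X) : assocB F x x = x := by
  simp only [assocB, ite_self]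
  exact hI x

theorem assocB_eq_F_blocks (a y z : X) : assocB F a z = F (blocks (n - 1) (n - 1) a y z) := by
  unfold assocB
  congr 1
  funext j
  simp only [blocks]
  split_ifs <;> rfl

theorem F_head_eq_assocB (hn : 2 ≤ n) (hS : NSym F) (x y : X) :
    F (fun k : Fin n => if (k : ℕ) = 0 then y else x) = assocB F x y := by
  have hperm : (fun k : Fin n => if (k : ℕ) = 0 then y else x) =
      (fun k : Fin n => if (k : ℕ) < n - 1 then x else y) ∘
        Equiv.swap ⟨0, by omega⟩ ⟨n - 1, by omega⟩ := by
    funext k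
    have := k.isLt
    simp only [Function.comp_apply, Equiv.swap_apply_def, Fin.ext_iff]
    split_ifs <;> simp_all
    omega
  rw [hperm, hS]
  rfl

theorem nest_blocks_eq_F (hn : 2 ≤ n) (x y z : X) :
    nest hn F (blocks (n - 1) (2 * n - 2) x y z) = F (blocks 1 (n - 1) (assocB F x y) y z) := by
  simp only [nest]
  congr 1
  funext j
  simp only [contract, blocks]
  split_ifs <;> try first | omega | rfl
  congr 1
  funext k
  have := k.isLt
  split_ifs <;> first | rfl | omega

theorem assocB_assocB_right_eq_nest {hn : 2 ≤ n} (hA : NAssoc hn F) (x y z : X) :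
    assocB F x (assocB F y z) = nest hn F (blocks (n - 1) (2 * n - 2) x y z) := by
  rw [nest_eq_F_contract hA _ (n - 1) le_rfl]
  unfold assocB
  congr 1
  funext j
  simp only [contract, blocks]
  split_ifs <;> try first | omega | rfl
  congr 1
  funext k
  have := k.isLt
  split_ifs <;> first | rfl | omega

theorem assocB_self_assocB {hn : 2 ≤ n} (hA : NAssoc hn F) (hI : NIdem F) (x y : X) :
    assocB F x (assocB F x y) = assocB F x y := by
  rw [assocB_assocB_right_eq_nest hA, nest_blocks_eq_F, assocB_self hI]
  unfold assocB
  congr 1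
  funext j
  simp only [blocks]
  split_ifs <;> first | rfl | omega

theorem F_update_zero_of_eq_assocB {hn : 2 ≤ n} (hA : NAssoc hn F) (hS : NSym F) (hI : NIdem F)
    {x y : X} {t : Fin n → X} (h0 : t ⟨0, by omega⟩ = assocB F x y)
    (h1 : t ⟨1, by omega⟩ = assocB F x y) :
    F (Function.update t ⟨0, by omega⟩ y) = F t := by
  -- `u = (y, x^{n-1}, t 1, …, t (n-1))`: contracting at `0` gives `t` because
  -- `t 0 = F(y, x^{n-1})`, and contracting at `1` gives `update t 0 y` because `t 1 = B(x, t 1)`.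
  let u : Fin (2 * n - 1) → X := fun j =>
    if (j : ℕ) = 0 then y else if (j : ℕ) < n then x else t ⟨j - (n - 1), by omega⟩
  have hu0 : contract F 0 hn (Nat.zero_le _) u = t := by
    funext ⟨j, hj⟩
    rcases j with _ | j
    · simpa [contract, u, h0] using F_head_eq_assocB hn hS x y
    · simp [contract, u, show n ≠ 0 by omega, show j + n - (n - 1) = j + 1 by omega]
  have hu1 : contract F 1 hn (by omega) u = Function.update t ⟨0, by omega⟩ y := by
    funext ⟨j, hj⟩
    rcases j with _ | _ | j
    · simp [contract, u]
    · have hwin : (fun k : Fin n => u ⟨1 + k, by omega⟩) =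
          fun k : Fin n => if (k : ℕ) < n - 1 then x else assocB F x y := by
        funext k
        have := k.isLt
        simp only [u]
        split_ifs <;> first | rfl | omega | skip
        rw [← h1]
        congr 2
        omega
      have habs : F (fun k : Fin n => if (k : ℕ) < n - 1 then x else assocB F x y) =
          assocB F x y := assocB_self_assocB hA hI x y
      simpa [contract, hwin, h1] using habs
    · simp [contract, u, show j + 1 + n - (n - 1) = j + 2 by omega]
  rw [← hu1, ← nest_eq_F_contract hA u 1, nest, hu0]

theorem F_blocks_succ {hn : 2 ≤ n} (hA : NAssoc hn F) (hS : NSym F) (hI : NIdem F)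
    (x y z : X) {k : ℕ} (hk : 1 ≤ k) (hkn : k + 1 ≤ n - 1) :
    F (blocks (k + 1) (n - 1) (assocB F x y) y z) = F (blocks k (n - 1) (assocB F x y) y z) := by
  set t : Fin n → X := blocks (k + 1) (n - 1) (assocB F x y) y z
  have h0 : t ⟨0, by omega⟩ = assocB F x y := if_pos k.succ_pos
  have h1 : t ⟨1, by omega⟩ = assocB F x y := if_pos (show 1 < k + 1 by omega)
  have hperm : Function.update t ⟨0, by omega⟩ y =
      blocks k (n - 1) (assocB F x y) y z ∘ Equiv.swap ⟨0, by omega⟩ ⟨k, by omega⟩ := by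
    funext j
    have := j.isLt
    simp only [t, Function.update_apply, Function.comp_apply, Equiv.swap_apply_def, blocks,
      Fin.ext_iff]
    split_ifs <;> simp_all <;> omega
  rw [← F_update_zero_of_eq_assocB hA hS hI h0 h1, hperm, hS]

theorem assocB_assocB_left_eq_nest {hn : 2 ≤ n} (hA : NAssoc hn F) (hS : NSym F) (hI : NIdem F)
    (x y z : X) :
    assocB F (assocB F x y) z = nest hn F (blocks (n - 1) (2 * n - 2) x y z) := by
  have hchain : ∀ k, 1 ≤ k → k ≤ n - 1 →
      F (blocks k (n - 1) (assocB F x y) y z) = F (blocks 1 (n - 1) (assocB F x y) y z) := by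
    intro k hk
    induction k, hk using Nat.le_induction with
    | base => exact fun _ => rfl
    | succ k hk ih => exact fun hkn => (F_blocks_succ hA hS hI x y z hk hkn).trans (ih (by omega))
  rw [nest_blocks_eq_F, ← hchain (n - 1) (by omega) le_rfl, assocB_eq_F_blocks _ y]

theorem nest_blocks_comm {hn : 2 ≤ n} (hA : NAssoc hn F) (hS : NSym F) (x y z : X) :
    nest hn F (blocks (n - 1) (2 * n - 2) x y z) =
      nest hn F (blocks (n - 1) (2 * n - 2) y x z) := by
  let f : Fin (2 * n - 1) → Fin (2 * n - 1) := fun j =>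
    ⟨if (j : ℕ) < n - 1 then j + (n - 1) else if (j : ℕ) < 2 * n - 2 then j - (n - 1) else j,
      by split_ifs <;> omega⟩
  have hf : Function.Involutive f := by
    intro j
    ext
    simp only [f]
    split_ifs <;> omega
  rw [← nest_comp_perm hA hS hf.toPerm]
  congr 1
  funext j
  simp only [blocks, Function.comp_apply, Function.Involutive.coe_toPerm, f]
  split_ifs <;> first | rfl | omega

end NaryBand

open NaryBand

/-- The binary operation associated with a symmetric `n`-ary band
is a right normal band: associative, idempotent, and `B(B(x,y),z) = B(B(y,x),z)`. -/
theorem stmt_4 {X : Type*} {n : ℕ} (hn : 2 ≤ n) (F : (Fin n → X) → X)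
    (hA : NAssoc hn F) (hS : NSym F) (hI : NIdem F) :
    (∀ x y z : X, assocB F (assocB F x y) z = assocB F x (assocB F y z)) ∧
    (∀ x : X, assocB F x x = x) ∧
    (∀ x y z : X, assocB F (assocB F x y) z = assocB F (assocB F y x) z) := by
  refine ⟨fun x y z => ?_, assocB_self hI, fun x y z => ?_⟩
  · rw [assocB_assocB_left_eq_nest hA hS hI, assocB_assocB_right_eq_nest hA]
  · rw [assocB_assocB_left_eq_nest hA hS hI, assocB_assocB_left_eq_nest hA hS hI,
      nest_blocks_comm hA hS]
end

section
/- Let (X,F) be a symmetric n-ary band. Then for every x₁,…,xₙ ∈ X one has ℓ_{F(x₁,…,xₙ)} = ℓ_{x₁} ∘ ℓ_{x₂} ∘ ⋯ ∘ ℓ_{xₙ}. -/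
open NaryBand

namespace List

theorem Perm.eq_of_adjacent_swap_invariant {α β : Type*} {N : ℕ} {f : List α → β}
    (hf : ∀ (a b : List α) (p q : α), (a ++ p :: q :: b).length = N →
      f (a ++ p :: q :: b) = f (a ++ q :: p :: b))
    {l l' : List α} (h : l.Perm l') (c : List α) (hc : (c ++ l).length = N) :
    f (c ++ l) = f (c ++ l') := by
  induction h generalizing c with
  | nil => rfl
  | cons x _ ih => simpa using ih (c ++ [x]) (by simpa using hc)
  | swap x y l => exact hf c l y x hc
  | trans h₁ _ ih₁ ih₂ => rw [ih₁ c hc, ih₂ c (by simpa [h₁.length_eq] using hc)]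

theorem flatten_replicate_perm_flatMap {α : Type*} (m : ℕ) (l : List α) :
    (replicate m l).flatten.Perm (l.flatMap (replicate m)) := by
  classical
  rw [perm_iff_count]
  intro a
  rw [count_flatten, map_replicate, sum_replicate, smul_eq_mul]
  induction l with
  | nil => simp
  | cons x t ih =>
    rw [flatMap_cons, count_append, ← ih, count_replicate, count_cons]
    split_ifs <;> simp_all [mul_add, add_comm]

end List

namespace NaryBand

variable {X : Type*} {n : ℕ} (F : (Fin n → X) → X) (d : X)

-- Entries missing from `l` are read as `d`; only lists of length `n` are ever passed.
def applyList (l : List X) : X :=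
  F (fun j => l.getD j d)

theorem contract_getD_append (hn : 2 ≤ n) {i : ℕ} (hi : i ≤ n - 1) {a m b : List X}
    (ha : a.length = i) (hm : m.length = n) (hb : b.length = n - 1 - i) :
    contract F i hn hi (fun j : Fin (2 * n - 1) => (a ++ m ++ b).getD j d) =
      fun j : Fin n => (a ++ applyList F d m :: b).getD j d := by
  funext j
  subst ha
  unfold contract applyList
  simp only [List.getD_eq_getElem?_getD, List.append_assoc]
  split_ifs with h₁ h₂
  · rw [List.getElem?_append_left h₁, List.getElem?_append_left h₁]
  · rw [List.getElem?_append_right (by omega), h₂]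
    simp only [Nat.sub_self, List.getElem?_cons_zero, Option.getD_some]
    congr 1
    funext k
    rw [List.getElem?_append_right (by omega), List.getElem?_append_left (by omega)]
    simp
  · rw [List.getElem?_append_right (by omega), List.getElem?_append_right (by omega),
      List.getElem?_append_right (by omega), List.getElem?_cons]
    simp only [if_neg (by omega : (j : ℕ) - a.length ≠ 0)]
    congr 2
    omega

theorem applyList_assoc (hn : 2 ≤ n) (hA : NAssoc hn F) {a m b : List X} (x z : X)
    (hm : m.length = n - 1) (hab : a.length + b.length = n - 2) :
    applyList F d (a ++ applyList F d (x :: m) :: z :: b) =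
      applyList F d (a ++ x :: applyList F d (m ++ [z]) :: b) := by
  have h := hA a.length (by omega) fun j => (a ++ (x :: m) ++ (z :: b)).getD j d
  rw [contract_getD_append F d hn _ rfl (by simp; omega) (by simp; omega)] at h
  have hw : a ++ (x :: m) ++ (z :: b) = (a ++ [x]) ++ (m ++ [z]) ++ b := by simp
  rw [hw, contract_getD_append F d hn _ (by simp) (by simp; omega) (by omega)] at h
  simp only [List.append_assoc, List.singleton_append] at h
  exact h

theorem applyList_swap (hS : NSym F) {a b : List X} (p q : X)
    (hl : (a ++ p :: q :: b).length = n) :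
    applyList F d (a ++ p :: q :: b) = applyList F d (a ++ q :: p :: b) := by
  have ha : a.length + 1 < n := by simp at hl; omega
  rw [applyList, ← hS (Equiv.swap ⟨a.length, by omega⟩ ⟨a.length + 1, ha⟩)]
  congr 1
  funext j
  simp only [Function.comp_apply, List.getD_eq_getElem?_getD]
  by_cases h₁ : j = ⟨a.length, by omega⟩
  · simp [h₁]
  by_cases h₂ : j = ⟨a.length + 1, ha⟩
  · simp [h₂]
  rw [Equiv.swap_apply_of_ne_of_ne h₁ h₂]
  rcases lt_or_ge (j : ℕ) a.length with h | h
  · rw [List.getElem?_append_left h, List.getElem?_append_left h]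
  · have h₃ : (j : ℕ) - a.length = (j - a.length - 2) + 2 := by grind
    rw [List.getElem?_append_right h, List.getElem?_append_right h, h₃]
    rfl

theorem applyList_swap_across (hn : 2 ≤ n) (hA : NAssoc hn F) (hS : NSym F) {a c : List X}
    (p q z : X) (ha : a.length = n - 2) (hc : c.length = n - 2) :
    applyList F d (a ++ [p, applyList F d (q :: c ++ [z])]) =
      applyList F d (a ++ [q, applyList F d (p :: c ++ [z])]) := by
  have hassoc (r s : X) := applyList_assoc F d hn hA (a := a) (m := s :: c) (b := []) r z
    (by simp; omega) (by simp; omega)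
  have hpq : applyList F d (p :: q :: c) = applyList F d (q :: p :: c) :=
    applyList_swap F d hS (a := []) p q (by simp; omega)
  rw [← hassoc, ← hassoc, hpq]

-- The value of the word `l ++ [y]`, `l` of length `k * (n - 1)`, bracketed from the right:
-- `F(l₁, …, l_{n-1}, F(l_n, …, F(…, y)))`.
def evalBlocks : ℕ → List X → X → X
  | 0, _, y => y
  | k + 1, l, y => applyList F d (l.take (n - 1) ++ [evalBlocks k (l.drop (n - 1)) y])

theorem evalBlocks_succ_append {b : List X} (hb : b.length = n - 1) (k : ℕ) (l : List X) (y : X) :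
    evalBlocks F d (k + 1) (b ++ l) y = applyList F d (b ++ [evalBlocks F d k l y]) := by
  rw [evalBlocks, List.take_left' hb, List.drop_left' hb]

theorem evalBlocks_swap (hn : 2 ≤ n) (hA : NAssoc hn F) (hS : NSym F) (k : ℕ) :
    ∀ {a b : List X} (p q y : X), (a ++ p :: q :: b).length = k * (n - 1) →
      evalBlocks F d k (a ++ p :: q :: b) y = evalBlocks F d k (a ++ q :: p :: b) y := by
  induction k with
  | zero => intro a b p q y hl; simp at hl
  | succ k ih =>
    intro a b p q y hl
    simp only [List.length_append, List.length_cons, Nat.succ_mul] at hl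
    rcases lt_trichotomy (a.length + 2) n with hlt | heq | hgt
    · obtain ⟨b₁, b₂, rfl, hb₁⟩ : ∃ b₁ b₂, b = b₁ ++ b₂ ∧ b₁.length = n - 3 - a.length :=
        ⟨_, _, (List.take_append_drop (n - 3 - a.length) b).symm, by simp; omega⟩
      have hblock (r s : X) : a ++ r :: s :: (b₁ ++ b₂) = (a ++ r :: s :: b₁) ++ b₂ := by simp
      rw [hblock, hblock, evalBlocks_succ_append F d (by simp; omega),
        evalBlocks_succ_append F d (by simp; omega)]
      simp only [List.append_assoc, List.cons_append]
      exact applyList_swap F d hS p q (by simp; omega)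
    · obtain ⟨k, rfl⟩ : ∃ k', k = k' + 1 := Nat.exists_eq_add_one.mpr (by
        rcases k with _ | k <;> simp at hl ⊢; omega)
      obtain ⟨c, b', rfl, hc⟩ : ∃ c b', b = c ++ b' ∧ c.length = n - 2 :=
        ⟨_, _, (List.take_append_drop (n - 2) b).symm, by simp [Nat.succ_mul] at hl ⊢; omega⟩
      have hblock (r s : X) : evalBlocks F d (k + 2) (a ++ r :: s :: (c ++ b')) y =
          applyList F d (a ++ [r, applyList F d (s :: c ++ [evalBlocks F d k b' y])]) := by
        have hw : a ++ r :: s :: (c ++ b') = (a ++ [r]) ++ ((s :: c) ++ b') := by simp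
        rw [hw, evalBlocks_succ_append F d (by simp; omega),
          evalBlocks_succ_append F d (by simp; omega)]
        simp
      rw [hblock, hblock, applyList_swap_across F d hn hA hS p q _ (by omega) hc]
    · obtain ⟨a₁, a₂, rfl, ha₁⟩ : ∃ a₁ a₂, a = a₁ ++ a₂ ∧ a₁.length = n - 1 :=
        ⟨_, _, (List.take_append_drop (n - 1) a).symm, by simp; omega⟩
      simp only [List.length_append] at hl
      rw [List.append_assoc, List.append_assoc, evalBlocks_succ_append F d ha₁,
        evalBlocks_succ_append F d ha₁, ih p q y (by simp; omega)]

theorem evalBlocks_perm (hn : 2 ≤ n) (hA : NAssoc hn F) (hS : NSym F) {l l' : List X}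
    (h : l.Perm l') {k : ℕ} (hl : l.length = k * (n - 1)) (y : X) :
    evalBlocks F d k l y = evalBlocks F d k l' y :=
  List.Perm.eq_of_adjacent_swap_invariant (f := fun l => evalBlocks F d k l y)
    (fun _ _ p q => evalBlocks_swap F d hn hA hS k p q y) h [] hl

theorem evalBlocks_one {b : List X} (hb : b.length = n - 1) (y : X) :
    evalBlocks F d 1 b y = applyList F d (b ++ [y]) := by
  have h := evalBlocks_succ_append F d hb 0 [] y
  rw [List.append_nil] at h
  exact h

theorem evalBlocks_append_applyList (hn : 2 ≤ n) (hA : NAssoc hn F) {m : List X}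
    (hm : m.length = n) (k : ℕ) {l : List X} (hl : l.length + 1 = (k + 1) * (n - 1)) (y : X) :
    evalBlocks F d (k + 1) (l ++ [applyList F d m]) y = evalBlocks F d (k + 2) (l ++ m) y := by
  induction k generalizing l with
  | zero =>
    obtain ⟨x, m', rfl⟩ := List.exists_cons_of_length_eq_add_one (l := m) (n := n - 1) (by omega)
    have hw : l ++ x :: m' = (l ++ [x]) ++ m' := by simp
    rw [evalBlocks_one F d (by simp; omega), hw, evalBlocks_succ_append F d (by simp; omega),
      evalBlocks_one F d (by simp at hm; omega)]
    simpa using applyList_assoc F d hn hA (b := []) x y (by simp at hm; omega) (by simp; omega)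
  | succ k ih =>
    obtain ⟨b, l', rfl, hb⟩ : ∃ b l', l = b ++ l' ∧ b.length = n - 1 :=
      ⟨_, _, (List.take_append_drop (n - 1) l).symm, by simp [Nat.succ_mul] at hl ⊢; omega⟩
    simp only [List.length_append, Nat.succ_mul] at hl
    rw [List.append_assoc, List.append_assoc, evalBlocks_succ_append F d hb,
      evalBlocks_succ_append F d hb, ih (by rw [Nat.succ_mul]; omega)]

theorem evalBlocks_append_replicate_applyList (hn : 2 ≤ n) (hA : NAssoc hn F) (hS : NSym F)
    {m : List X} (hm : m.length = n) (y : X) (j : ℕ) :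
    ∀ {k : ℕ} {l : List X}, l.length + j = (k + 1) * (n - 1) →
      evalBlocks F d (k + 1) (l ++ List.replicate j (applyList F d m)) y =
        evalBlocks F d (k + 1 + j) (l ++ (List.replicate j m).flatten) y := by
  induction j with
  | zero => simp
  | succ j ih =>
    intro k l hl
    rw [Nat.succ_mul] at hl
    have hperm : ((l ++ List.replicate j (applyList F d m)) ++ m).Perm
        ((l ++ m) ++ List.replicate j (applyList F d m)) := by
      simpa only [List.append_assoc] using List.perm_append_comm.append_left l
    rw [List.replicate_succ', ← List.append_assoc,
      evalBlocks_append_applyList F d hn hA hm k (by simp [Nat.succ_mul]; omega),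
      evalBlocks_perm F d hn hA hS hperm (by simp [Nat.succ_mul, hm]; omega),
      ih (by simp [Nat.succ_mul, hm]; omega), List.replicate_succ, List.flatten_cons,
      List.append_assoc]
    ring_nf

theorem applyList_ofFn (x : Fin n → X) : applyList F d (List.ofFn x) = F x := by
  simp [applyList]

theorem assocB_eq_evalBlocks_one (x y : X) :
    assocB F x y = evalBlocks F d 1 (List.replicate (n - 1) x) y := by
  rw [evalBlocks_one F d (by simp), applyList, assocB]
  congr 1
  funext j
  split_ifs with h
  · rw [List.getD_append _ _ _ _ (by simpa using h)]
    simp [h]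
  · rw [List.getD_append_right _ _ _ _ (by simp; omega)]
    simp [show (j : ℕ) - (n - 1) = 0 by omega]

theorem foldr_map_ell (l : List X) (y : X) :
    (l.map (ell F)).foldr (· ∘ ·) id y =
      evalBlocks F d l.length (l.flatMap (List.replicate (n - 1))) y := by
  induction l with
  | nil => rfl
  | cons x l ih =>
    rw [List.map_cons, List.foldr_cons, Function.comp_apply, ih, List.flatMap_cons,
      List.length_cons, evalBlocks_succ_append F d (by simp), ell,
      assocB_eq_evalBlocks_one F d, evalBlocks_one F d (by simp)]
end NaryBand

theorem stmt_6_general {X : Type*} {n : ℕ} (hn : 2 ≤ n) (F : (Fin n → X) → X)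
    (hA : NAssoc hn F) (hS : NSym F) :
    ∀ xs : Fin n → X,
      ell F (F xs) =
        (List.ofFn (fun i => ell F (xs i))).foldr (· ∘ ·) id := by
  intro xs
  funext y
  set d := xs ⟨0, by omega⟩
  have hlen : (List.ofFn xs).length = n := List.length_ofFn
  calc ell F (F xs) y
      = evalBlocks F d 1 (List.replicate (n - 1) (applyList F d (List.ofFn xs))) y := by
        rw [applyList_ofFn, ell, assocB_eq_evalBlocks_one F d]
    _ = evalBlocks F d n ((List.replicate (n - 1) (List.ofFn xs)).flatten) y := by
        simpa [show 1 + (n - 1) = n by omega] using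
          evalBlocks_append_replicate_applyList F d hn hA hS hlen y (n - 1) (k := 0) (l := [])
            (by simp)
    _ = evalBlocks F d n ((List.ofFn xs).flatMap (List.replicate (n - 1))) y :=
        evalBlocks_perm F d hn hA hS (List.flatten_replicate_perm_flatMap _ _)
          (by simp [hlen, Nat.mul_comm]) y
    _ = ((List.ofFn xs).map (ell F)).foldr (· ∘ ·) id y := by
        rw [foldr_map_ell F d, hlen]
    _ = (List.ofFn (fun i => ell F (xs i))).foldr (· ∘ ·) id y := by
        rw [List.map_ofFn]
        rfl

/-- In a symmetric `n`-ary band,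
`ℓ_{F(x₁,…,xₙ)} = ℓ_{x₁} ∘ ⋯ ∘ ℓ_{xₙ}`. -/
theorem stmt_6 {X : Type*} {n : ℕ} (hn : 2 ≤ n) (F : (Fin n → X) → X)
    (hA : NAssoc hn F) (hS : NSym F) (hI : NIdem F) :
    ∀ xs : Fin n → X,
      ell F (F xs) =
        (List.ofFn (fun i => ell F (xs i))).foldr (· ∘ ·) id :=
  stmt_6_general hn F hA hS
end

section
/- Let (X,F) be a symmetric n-ary band. Then σ is a congruence for F: if x₁,…,xₙ, y₁,…,yₙ ∈ X satisfy x_i σ y_i for every i ∈ {1,…,n}, then F(x₁,…,xₙ) σ F(y₁,…,yₙ). -/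
open NaryBand

/-!
Write `L_a w = F(a₁, …, a_{n-1}, w)` for a block `a` of `n - 1` entries, so that
`ℓ_x = L_{(x,…,x)}`. Associativity and symmetry make a nested product
`L_{a¹}(L_{a²}(⋯ L_{aʲ}(c)))` invariant under every permutation of its `j(n-1)` block entries:
swaps inside the outer block come from symmetry, swaps inside the inner blocks from induction,
and the exchange of the first entries of the two outer blocks from associativity; these swaps
connect all entries. Expanding each copy of `F xs` in `ℓ_{F xs} w` and transposing the resulting
square array of entries gives `ℓ_{F xs} = ℓ_{x₁} ∘ ⋯ ∘ ℓ_{xₙ}`. Hence `ℓ_{F xs}` fixes `F ys` as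
soon as every `ℓ_{x_i}` does, and `ℓ_{x_i}` fixes `F ys` as soon as it fixes `y_i`, because `ℓ_x`
passes into any single argument of `F`.
-/

open Equiv

theorem Fin.foldr_eq_self {α : Type*} {n : ℕ} {f : Fin n → α → α} {x : α}
    (h : ∀ i, f i x = x) : Fin.foldr n f x = x := by
  induction n with
  | zero => exact Fin.foldr_zero f x
  | succ n ih => rw [Fin.foldr_succ, ih fun i => h i.succ, h 0]

section InvariantPerms

variable {α X Y : Type*}

def invariantPerms (P : (α → X) → Y) : Subgroup (Perm α) where
  carrier := {π | ∀ g, P (g ∘ π) = P g}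
  mul_mem' {_ _} hπ hτ g := (hτ _).trans (hπ g)
  one_mem' _ := rfl
  inv_mem' {π} hπ g := by
    rw [← hπ (g ∘ ⇑π⁻¹), Function.comp_assoc, ← Perm.coe_mul, inv_mul_cancel, Perm.coe_one,
      Function.comp_id]

theorem mem_invariantPerms {P : (α → X) → Y} {π : Perm α} :
    π ∈ invariantPerms P ↔ ∀ g, P (g ∘ π) = P g :=
  Iff.rfl

theorem invariantPerms_eq_top [DecidableEq α] [Finite α] {P : (α → X) → Y} (o : α)
    (h : ∀ p, swap o p ∈ invariantPerms P) : invariantPerms P = ⊤ := by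
  rw [eq_top_iff, ← Perm.closure_isSwap, Subgroup.closure_le]
  rintro _ ⟨x, y, -, rfl⟩
  exact SubmonoidClass.swap_mem_trans _ (swap_comm o x ▸ h x) (h y)

end InvariantPerms

namespace NaryBand

variable {X : Type*} {k : ℕ}

theorem NAssoc.contract_eq {n : ℕ} {hn : 2 ≤ n} {F : (Fin n → X) → X} (hA : NAssoc hn F)
    (x : Fin (2 * n - 1) → X) :
    ∀ (i : ℕ) (hi : i ≤ n - 1), F (contract F i hn hi x) = F (contract F 0 hn (by omega) x)
  | 0, _ => rfl
  | i + 1, hi => (hA i hi x).symm.trans (hA.contract_eq x i (by omega))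

theorem NAssoc.cons_snoc {hn : 2 ≤ k + 2} {F : (Fin (k + 2) → X) → X} (hA : NAssoc hn F)
    (a t : Fin (k + 1) → X) (p : X) :
    F (Fin.cons (F (Fin.snoc a p)) t) = F (Fin.snoc a (F (Fin.cons p t))) := by
  let x : Fin (2 * (k + 2) - 1) → X := fun q =>
    if h : (q : ℕ) < k + 2 then (Fin.snoc a p : Fin (k + 2) → X) ⟨q, h⟩
    else t ⟨q - (k + 2), by omega⟩
  have h_first : contract F 0 hn (by omega) x = Fin.cons (F (Fin.snoc a p)) t := by
    ext j
    induction j using Fin.cases with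
    | zero => simp [contract, x]
    | succ j =>
      simp only [contract, Fin.cons_succ, x, Fin.val_succ, dite_false, not_lt_zero]
      rw [dif_neg (by omega), dif_neg (by omega)]
      exact congrArg t (Fin.ext (by simp; omega))
  have h_last : contract F (k + 1) hn (by omega) x = Fin.snoc a (F (Fin.cons p t)) := by
    ext j
    induction j using Fin.lastCases with
    | last =>
      simp only [contract, Fin.snoc_last, Fin.val_last, lt_self_iff_false, dite_false, dite_true]
      refine congrArg F (funext fun q => ?_)
      induction q using Fin.cases with
      | zero => simp [x, Fin.snoc]
      | succ q =>
        simp only [x, Fin.cons_succ]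
        rw [dif_neg (by simp; omega)]
        exact congrArg t (Fin.ext (by simp; omega))
    | cast j =>
      have := j.isLt
      simp [contract, x, Fin.snoc, Nat.le_of_lt_succ this]
      omega
  rw [← h_first, ← h_last, hA.contract_eq x (k + 1)]

def leftMul (F : (Fin (k + 2) → X) → X) (a : Fin (k + 1) → X) (w : X) : X :=
  F (Fin.snoc a w)

def blockProd (F : (Fin (k + 2) → X) → X) {j : ℕ} (M : Fin j → Fin (k + 1) → X) (c : X) : X :=
  Fin.foldr j (fun r => leftMul F (M r)) c

variable {hn : 2 ≤ k + 2} {F : (Fin (k + 2) → X) → X}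

theorem assocB_eq_leftMul (x y : X) : assocB F x y = leftMul F (fun _ => x) y := by
  unfold assocB leftMul
  congr 1

theorem leftMul_comp_swap (hS : NSym F) (a : Fin (k + 1) → X) (i i' : Fin (k + 1)) (w : X) :
    leftMul F (a ∘ swap i i') w = leftMul F a w := by
  have : (Fin.snoc (a ∘ swap i i') w : Fin (k + 2) → X) =
      Fin.snoc a w ∘ swap i.castSucc i'.castSucc := by
    ext j
    induction j using Fin.lastCases with
    | last =>
      simp [swap_apply_of_ne_of_ne (Fin.castSucc_lt_last i).ne' (Fin.castSucc_lt_last i').ne']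
    | cast j => simp [(Fin.castSucc_injective _).swap_apply]
  rw [leftMul, this, hS]
  rfl

theorem leftMul_update (hS : NSym F) (a : Fin (k + 1) → X) (i : Fin (k + 1)) (y : X) :
    leftMul F (Function.update a i y) (a i) = leftMul F a y := by
  have : (Fin.snoc (Function.update a i y) (a i) : Fin (k + 2) → X) =
      Fin.snoc a y ∘ swap i.castSucc (Fin.last _) := by
    ext j
    induction j using Fin.lastCases with
    | last => simp
    | cast j =>
      by_cases h : j = i
      · subst h; simp
      · simp [h, swap_apply_of_ne_of_ne]
  rw [leftMul, this, hS]
  rfl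

theorem leftMul_F_eq_F_update (hA : NAssoc hn F) (hS : NSym F) (a : Fin (k + 1) → X)
    (z : Fin (k + 2) → X) (p : Fin (k + 2)) :
    leftMul F a (F z) = F (Function.update z p (leftMul F a (z p))) := by
  set t := Fin.tail (z ∘ swap 0 p)
  have hz : z ∘ swap 0 p = Fin.cons (z p) t := by
    rw [← Fin.cons_self_tail (z ∘ swap 0 p)]
    simp [t]
  calc leftMul F a (F z) = F (Fin.snoc a (F (Fin.cons (z p) t))) := by
        rw [← hz, hS]; rfl
    _ = F (Fin.cons (leftMul F a (z p)) t) := (hA.cons_snoc a t (z p)).symm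
    _ = F (Function.update z p (leftMul F a (z p)) ∘ swap 0 p) := by
        rw [Function.update_comp_equiv, hz]
        simp
    _ = F (Function.update z p (leftMul F a (z p))) := hS _ _

theorem leftMul_leftMul (hA : NAssoc hn F) (hS : NSym F) (a b : Fin (k + 1) → X)
    (i : Fin (k + 1)) (v : X) :
    leftMul F a (leftMul F b v) = leftMul F (Function.update b i (leftMul F a (b i))) v := by
  rw [show leftMul F b v = F (Fin.snoc b v) from rfl,
    leftMul_F_eq_F_update hA hS a _ i.castSucc, Fin.snoc_castSucc, ← Fin.snoc_update]
  rfl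

theorem leftMul_exchange (hA : NAssoc hn F) (hS : NSym F) (a b : Fin (k + 1) → X)
    (i i' : Fin (k + 1)) (v : X) :
    leftMul F a (leftMul F b v) =
      leftMul F (Function.update a i (b i')) (leftMul F (Function.update b i' (a i)) v) := by
  rw [leftMul_leftMul hA hS a b i', leftMul_leftMul hA hS _ _ i', Function.update_idem,
    Function.update_self, leftMul_update hS]

theorem blockProd_succ {j : ℕ} (M : Fin (j + 1) → Fin (k + 1) → X) (c : X) :
    blockProd F M c = leftMul F (M 0) (blockProd F (Fin.tail M) c) :=
  Fin.foldr_succ _ _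

theorem blockProd_comp_swap_zero (hS : NSym F) {j : ℕ} (g : Fin (j + 1) × Fin (k + 1) → X)
    (i : Fin (k + 1)) (c : X) :
    blockProd F (Function.curry (g ∘ swap (0, 0) (0, i))) c = blockProd F (Function.curry g) c := by
  have h_zero : Function.curry (g ∘ swap (0, 0) (0, i)) 0 = Function.curry g 0 ∘ swap 0 i := by
    ext i'
    simp only [Function.comp_apply, Function.curry_apply, swap_apply_def, Prod.ext_iff]
    split_ifs <;> simp_all
  have h_tail : Fin.tail (Function.curry (g ∘ swap (0, 0) (0, i))) =
      Fin.tail (Function.curry g) := by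
    ext r i'
    simp [Fin.tail, swap_apply_def, Prod.ext_iff, Fin.succ_ne_zero]
  rw [blockProd_succ, blockProd_succ, h_zero, h_tail, leftMul_comp_swap hS]

theorem blockProd_comp_swap_succ {j : ℕ} (g : Fin (j + 1) × Fin (k + 1) → X)
    (p q : Fin j × Fin (k + 1)) (c : X) :
    blockProd F (Function.curry (g ∘ swap (p.1.succ, p.2) (q.1.succ, q.2))) c =
      leftMul F (Function.curry g 0)
        (blockProd F (Function.curry ((g ∘ Prod.map Fin.succ id) ∘ swap p q)) c) := by
  have h_zero : Function.curry (g ∘ swap (p.1.succ, p.2) (q.1.succ, q.2)) 0 =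
      Function.curry g 0 := by
    ext i'
    simp [swap_apply_of_ne_of_ne, Prod.ext_iff, (Fin.succ_ne_zero _).symm]
  have h_tail : Fin.tail (Function.curry (g ∘ swap (p.1.succ, p.2) (q.1.succ, q.2))) =
      Function.curry ((g ∘ Prod.map Fin.succ id) ∘ swap p q) := by
    ext r i'
    exact congrArg g
      (((Fin.succ_injective _).prodMap Function.injective_id).swap_apply p q (r, i'))
  rw [blockProd_succ, h_zero, h_tail]

theorem blockProd_comp_swap_zero_one (hA : NAssoc hn F) (hS : NSym F) {j : ℕ}
    (g : Fin (j + 2) × Fin (k + 1) → X) (c : X) :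
    blockProd F (Function.curry (g ∘ swap (0, 0) ((0 : Fin (j + 1)).succ, 0))) c =
      blockProd F (Function.curry g) c := by
  set σ := swap ((0 : Fin (j + 2)), (0 : Fin (k + 1))) ((0 : Fin (j + 1)).succ, 0)
  have h_zero : Function.curry (g ∘ σ) 0 =
      Function.update (Function.curry g 0) 0 (g ((0 : Fin (j + 1)).succ, 0)) := by
    ext i'
    by_cases hi : i' = 0 <;> simp [σ, hi, swap_apply_of_ne_of_ne, Prod.ext_iff]
  have h_one : Fin.tail (Function.curry (g ∘ σ)) 0 =
      Function.update (Fin.tail (Function.curry g) 0) 0 (g (0, 0)) := by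
    ext i'
    by_cases hi : i' = 0 <;> simp [σ, hi, Fin.tail, swap_apply_of_ne_of_ne, Prod.ext_iff]
  have h_rest : Fin.tail (Fin.tail (Function.curry (g ∘ σ))) =
      Fin.tail (Fin.tail (Function.curry g)) := by
    ext r i'
    exact congrArg g (swap_apply_of_ne_of_ne (by simp [Prod.ext_iff])
      fun h => Fin.succ_ne_zero r (Fin.succ_injective _ (Prod.ext_iff.1 h).1))
  simp only [blockProd_succ]
  rw [h_zero, h_one, h_rest, leftMul_exchange hA hS (Function.curry g 0) _ 0 0]
  rfl

theorem blockProd_comp_perm (hA : NAssoc hn F) (hS : NSym F) (c : X) :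
    ∀ {j : ℕ} (π : Perm (Fin j × Fin (k + 1))) (g : Fin j × Fin (k + 1) → X),
      blockProd F (Function.curry (g ∘ π)) c = blockProd F (Function.curry g) c
  | 0, _, _ => rfl
  | j + 1, π, g => by
    suffices invariantPerms (fun g => blockProd F (Function.curry g) c) = ⊤ from
      mem_invariantPerms.1 (this ▸ Subgroup.mem_top π) g
    refine invariantPerms_eq_top (0, 0) fun ⟨r, i⟩ => ?_
    induction r using Fin.cases with
    | zero => exact fun g => blockProd_comp_swap_zero hS g i c
    | succ r =>
      cases j with
      | zero => exact r.elim0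
      | succ j =>
        have h_rows : swap ((0 : Fin (j + 1)).succ, 0) (r.succ, i) ∈
            invariantPerms (fun g => blockProd F (Function.curry g) c) := fun g =>
          (blockProd_comp_swap_succ g (0, 0) (r, i) c).trans
            (by rw [blockProd_comp_perm hA hS c]; exact (blockProd_succ _ c).symm)
        exact SubmonoidClass.swap_mem_trans _
          (fun g => blockProd_comp_swap_zero_one hA hS g c) h_rows

theorem blockProd_transpose (hA : NAssoc hn F) (hS : NSym F) (a : Fin (k + 1) → X) (c : X) :
    blockProd F (fun _ : Fin (k + 1) => a) c = blockProd F (fun r _ => a r) c :=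
  (blockProd_comp_perm hA hS c (Equiv.prodComm _ _) fun p => a p.2).symm

theorem leftMul_const_F_eq_blockProd (hA : NAssoc hn F) (hS : NSym F) (xs : Fin (k + 2) → X)
    (w : X) :
    leftMul F (fun _ => F xs) w =
      blockProd F (fun _ : Fin (k + 1) => Fin.init xs)
        (leftMul F (fun _ => xs (Fin.last _)) w) := by
  -- `b j` is the block `(F xs, …, F xs, x_n, …, x_n, w)` with `j` copies of `F xs`
  let b : ℕ → Fin (k + 2) → X := fun j i =>
    if (i : ℕ) < j then F xs else (Fin.snoc (fun _ => xs (Fin.last _)) w : Fin (k + 2) → X) i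
  have hb : ∀ j ≤ k + 1, F (b j) = blockProd F (fun _ : Fin j => Fin.init xs) (F (b 0)) := by
    intro j hj
    induction j with
    | zero => rfl
    | succ j ih =>
      have h_step : b (j + 1) = Function.update (b j) ⟨j, by omega⟩ (F xs) := by
        ext i
        by_cases hi : (i : ℕ) = j
        · simp [b, hi, Function.update_apply, Fin.ext_iff]
        · simp only [b, Function.update_apply, Fin.ext_iff, hi, if_false]
          congr 1
          simp only [Nat.lt_succ_iff, eq_iff_iff]
          omega
      have h_entry : b j ⟨j, by omega⟩ = xs (Fin.last _) := by
        simp [b, Fin.snoc, show j ≤ k by omega]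
      have h_expand : F xs = leftMul F (Fin.init xs) (b j ⟨j, by omega⟩) := by
        rw [h_entry, leftMul, Fin.snoc_init_self]
      rw [h_step, h_expand, ← leftMul_F_eq_F_update hA hS, ih (by omega), blockProd_succ]
      rfl
  have h_zero : b 0 = Fin.snoc (fun _ => xs (Fin.last _)) w := by ext i; simp [b]
  have h_full : b (k + 1) = Fin.snoc (fun _ => F xs) w := by
    ext i
    induction i using Fin.lastCases with
    | last => simp [b]
    | cast i =>
      have := i.isLt
      simp [b]
      omega
  simpa [leftMul, h_zero, h_full] using hb (k + 1) le_rfl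

theorem assocB_F_eq_foldr (hA : NAssoc hn F) (hS : NSym F) (xs : Fin (k + 2) → X) (w : X) :
    assocB F (F xs) w = Fin.foldr (k + 2) (fun i => assocB F (xs i)) w := by
  simp only [assocB_eq_leftMul]
  rw [leftMul_const_F_eq_blockProd hA hS, blockProd_transpose hA hS, Fin.foldr_succ_last]
  rfl

theorem assocB_F_F_of_forall (hA : NAssoc hn F) (hS : NSym F) (xs ys : Fin (k + 2) → X)
    (h : ∀ i, assocB F (xs i) (ys i) = ys i) : assocB F (F xs) (F ys) = F ys := by
  refine (assocB_F_eq_foldr hA hS xs _).trans (Fin.foldr_eq_self fun i => ?_)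
  rw [assocB_eq_leftMul, leftMul_F_eq_F_update hA hS _ ys i, ← assocB_eq_leftMul, h,
    Function.update_eq_self]

end NaryBand

theorem stmt_10_general {X : Type*} {n : ℕ} (hn : 2 ≤ n) (F : (Fin n → X) → X)
    (hA : NAssoc hn F) (hS : NSym F) :
    ∀ xs ys : Fin n → X, (∀ i, sigmaRel F (xs i) (ys i)) →
      sigmaRel F (F xs) (F ys) := by
  obtain ⟨k, rfl⟩ : ∃ k, n = k + 2 := ⟨n - 2, by omega⟩
  intro xs ys h
  exact ⟨assocB_F_F_of_forall hA hS xs ys fun i => (h i).1,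
    assocB_F_F_of_forall hA hS ys xs fun i => (h i).2⟩

/-- In a symmetric `n`-ary band, the relation `σ` is a congruence
for `F`. -/
theorem stmt_10 {X : Type*} {n : ℕ} (hn : 2 ≤ n) (F : (Fin n → X) → X)
    (hA : NAssoc hn F) (hS : NSym F) (hI : NIdem F) :
    ∀ xs ys : Fin n → X, (∀ i, sigmaRel F (xs i) (ys i)) →
      sigmaRel F (F xs) (F ys) :=
  stmt_10_general hn F hA hS
end

section
/- Let (Y,∧) be a semilattice, (X_α)_{α∈Y} a family of nonempty sets, and for each α ∈ Y let F_α : X_α^n → X_α be an associative n-ary operation. Suppose that for all α, β ∈ Y with α ≥ β (i.e., α ∧ β = β) there is a map φ_{α,β} : X_α → X_β such that: (a) φ_{α,α} is the identity on X_α; (b) φ_{β,γ} ∘ φ_{α,β} = φ_{α,γ} whenever α ≥ β ≥ γ; and each φ_{α,β} is a homomorphism, i.e., φ_{α,β}(F_α(x₁,…,xₙ)) = F_β(φ_{α,β}(x₁),…,φ_{α,β}(xₙ)). Define F on the disjoint union X = ⨆_{α∈Y} X_α by: for x_i ∈ X_{α_i} (i = 1,…,n) and α = α₁ ∧ ⋯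 ∧ αₙ, F(x₁,…,xₙ) = F_α(φ_{α₁,α}(x₁),…,φ_{αₙ,α}(xₙ)). Then F is an associative n-ary operation on X, i.e., (X,F) is an n-ary semigroup. -/
/-! Let `μ` be the meet of the indices of a `(2n-1)`-tuple `x`. Every entry of either
contraction of `x` lies over some `α ≥ μ`, and the meet of their indices is again `μ`. Pushing
everything into the fibre over `μ` with the compatible homomorphisms `φ_{α,μ}` turns `F` of a
contraction of `x` into `F_μ` of the same contraction of `φ_{·,μ} ∘ x`, so associativity of `F`
reduces to associativity of `F_μ`. -/

namespace NaryBand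

section Contract

variable {X X' : Type*} {n : ℕ} (F : (Fin n → X) → X) (i : ℕ) (hn : 2 ≤ n)
  (hi : i ≤ n - 1) (x : Fin (2 * n - 1) → X)

theorem contract_map (G : (Fin n → X') → X') (f : X → X')
    (hf : f (F fun k => x ⟨i + k, by have := k.isLt; omega⟩) =
      G fun k => f (x ⟨i + k, by have := k.isLt; omega⟩)) :
    (fun j => f (contract F i hn hi x j)) = contract G i hn hi (f ∘ x) := by
  funext j
  unfold contract
  split_ifs <;> simp [hf]

theorem contract_self :
    contract F i hn hi x ⟨i, by omega⟩ =
      F fun k => x ⟨i + k, by have := k.isLt; omega⟩ := by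
  simp [contract]

theorem contract_eq_or (j : Fin n) :
    (∃ k, contract F i hn hi x j = x k) ∨
      contract F i hn hi x j = F fun k => x ⟨i + k, by have := k.isLt; omega⟩ := by
  unfold contract
  split_ifs
  · exact .inl ⟨_, rfl⟩
  · exact .inr rfl
  · exact .inl ⟨_, rfl⟩

theorem exists_contract_eq_or (k : Fin (2 * n - 1)) :
    (∃ j, contract F i hn hi x j = x k) ∨
      ∃ m : Fin n, k = ⟨i + m, by have := m.isLt; omega⟩ := by
  by_cases hk : (k : ℕ) < i
  · exact .inl ⟨⟨k, by omega⟩, by simp [contract, hk]⟩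
  by_cases hk' : (k : ℕ) < i + n
  · exact .inr ⟨⟨k - i, by omega⟩, Fin.ext (by simp; omega)⟩
  · refine .inl ⟨⟨k + 1 - n, by omega⟩, ?_⟩
    simp only [contract]
    rw [dif_neg (by omega), dif_neg (by omega)]
    congr 1; ext; simp; omega

end Contract

section Semilattice

variable {Y : Type*} [SemilatticeInf Y]

theorem le_nExt_inf_iff {n : ℕ} (hn : 1 ≤ n) (x : Fin n → Y) (z : Y) :
    z ≤ nExt hn (· ⊓ ·) x ↔ ∀ i, z ≤ x i := by
  have le_foldr_iff (l : List Y) (b : Y) :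
      z ≤ l.foldr (· ⊓ ·) b ↔ (∀ y ∈ l, z ≤ y) ∧ z ≤ b := by
    induction l with
    | nil => simp
    | cons y l ih => simp [ih, and_assoc]
  rw [nExt, le_foldr_iff]
  simp only [List.mem_ofFn, forall_exists_index, forall_apply_eq_imp_iff]
  constructor
  · rintro ⟨hlt, hlast⟩ i
    by_cases hi : (i : ℕ) < n - 1
    · exact hlt ⟨i, hi⟩
    · convert hlast; omega
  · exact fun h => ⟨fun _ => h _, h _⟩

theorem nExt_inf_le {n : ℕ} (hn : 1 ≤ n) (x : Fin n → Y) (i : Fin n) :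
    nExt hn (· ⊓ ·) x ≤ x i :=
  (le_nExt_inf_iff hn x _).1 le_rfl i

theorem nExt_inf_contract {n : ℕ} (hn : 2 ≤ n) (i : ℕ) (hi : i ≤ n - 1)
    (a : Fin (2 * n - 1) → Y) :
    nExt (Nat.one_le_of_lt hn) (· ⊓ ·)
        (contract (nExt (Nat.one_le_of_lt hn) (· ⊓ ·)) i hn hi a) =
      nExt (by omega) (· ⊓ ·) a := by
  apply le_antisymm
  · refine (le_nExt_inf_iff _ _ _).2 fun k => ?_
    rcases exists_contract_eq_or (nExt (Nat.one_le_of_lt hn) (· ⊓ ·)) i hn hi a k with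
      ⟨j, hj⟩ | ⟨m, rfl⟩
    · exact hj ▸ nExt_inf_le _ _ j
    · refine (nExt_inf_le _ _ ⟨i, by omega⟩).trans ?_
      rw [contract_self]
      exact nExt_inf_le _ _ m
  · refine (le_nExt_inf_iff _ _ _).2 fun j => ?_
    rcases contract_eq_or (nExt (Nat.one_le_of_lt hn) (· ⊓ ·)) i hn hi a j with ⟨k, hk⟩ | hw
    · exact hk ▸ nExt_inf_le _ _ k
    · exact hw ▸ (le_nExt_inf_iff _ _ _).2 fun m => nExt_inf_le _ _ _

end Semilattice

section StrongSemilattice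

variable {Y : Type*} {Xf : Y → Type*} {n : ℕ}
  (Fa : ∀ α, (Fin n → Xf α) → Xf α) (φ : ∀ α β, Xf α → Xf β)

def toFiber (μ : Y) (s : Σ α, Xf α) : Xf μ :=
  φ s.1 μ s.2

theorem sigma_eq_mk_toFiber (hid : ∀ α, φ α α = id) {μ : Y} (s : Σ α, Xf α)
    (hs : s.1 = μ) :
    s = ⟨μ, toFiber φ μ s⟩ := by
  subst hs
  simp [toFiber, hid]

variable [SemilatticeInf Y]

def strongSemilatticeOp (hn : 1 ≤ n) (xs : Fin n → Σ α, Xf α) : Σ α, Xf α :=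
  ⟨nExt hn (· ⊓ ·) fun i => (xs i).1, Fa _ fun i => φ (xs i).1 _ (xs i).2⟩

theorem toFiber_strongSemilatticeOp
    (hcomp : ∀ α β γ, β ≤ α → γ ≤ β → φ β γ ∘ φ α β = φ α γ)
    (hhom : ∀ α β, β ≤ α → ∀ xs : Fin n → Xf α,
      φ α β (Fa α xs) = Fa β fun i => φ α β (xs i))
    (hn : 1 ≤ n) {μ : Y} (xs : Fin n → Σ α, Xf α) (hμ : ∀ i, μ ≤ (xs i).1) :
    toFiber φ μ (strongSemilatticeOp Fa φ hn xs) = Fa μ fun i => toFiber φ μ (xs i) := by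
  have hν : μ ≤ nExt hn (· ⊓ ·) fun i => (xs i).1 := (le_nExt_inf_iff hn _ μ).2 hμ
  simp only [toFiber, strongSemilatticeOp, hhom _ _ hν]
  congr 1
  funext i
  exact congrFun (hcomp _ _ _ (nExt_inf_le hn _ i) hν) _

theorem strongSemilatticeOp_contract (hid : ∀ α, φ α α = id)
    (hcomp : ∀ α β γ, β ≤ α → γ ≤ β → φ β γ ∘ φ α β = φ α γ)
    (hhom : ∀ α β, β ≤ α → ∀ xs : Fin n → Xf α,
      φ α β (Fa α xs) = Fa β fun i => φ α β (xs i))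
    (hn : 2 ≤ n) (i : ℕ) (hi : i ≤ n - 1) (x : Fin (2 * n - 1) → Σ α, Xf α) :
    let μ := nExt (by omega) (· ⊓ ·) fun k => (x k).1
    strongSemilatticeOp Fa φ (Nat.one_le_of_lt hn)
        (contract (strongSemilatticeOp Fa φ (Nat.one_le_of_lt hn)) i hn hi x) =
      ⟨μ, Fa μ (contract (Fa μ) i hn hi (toFiber φ μ ∘ x))⟩ := by
  intro μ
  have h1 : 1 ≤ n := Nat.one_le_of_lt hn
  set op := strongSemilatticeOp Fa φ h1
  have hfst : (fun j => (contract op i hn hi x j).1) =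
      contract (nExt h1 (· ⊓ ·)) i hn hi fun k => (x k).1 :=
    contract_map op i hn hi x _ Sigma.fst rfl
  have hμ_eq : (op (contract op i hn hi x)).1 = μ := by
    change nExt h1 _ (fun j => (contract op i hn hi x j).1) = μ
    rw [hfst]
    exact nExt_inf_contract hn i hi _
  have hμ : ∀ j, μ ≤ (contract op i hn hi x j).1 := (le_nExt_inf_iff h1 _ μ).1 hμ_eq.ge
  rw [sigma_eq_mk_toFiber φ hid _ hμ_eq, toFiber_strongSemilatticeOp Fa φ hcomp hhom h1 _ hμ]
  congr 2
  exact contract_map op i hn hi x _ _ <| toFiber_strongSemilatticeOp Fa φ hcomp hhom h1 _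
    fun k => nExt_inf_le _ _ _

theorem nAssoc_strongSemilatticeOp (hid : ∀ α, φ α α = id)
    (hcomp : ∀ α β γ, β ≤ α → γ ≤ β → φ β γ ∘ φ α β = φ α γ)
    (hhom : ∀ α β, β ≤ α → ∀ xs : Fin n → Xf α,
      φ α β (Fa α xs) = Fa β fun i => φ α β (xs i))
    (hn : 2 ≤ n) (hFa : ∀ α, NAssoc hn (Fa α)) :
    NAssoc hn (strongSemilatticeOp Fa φ (Nat.one_le_of_lt hn)) := by
  intro i hi x
  rw [strongSemilatticeOp_contract Fa φ hid hcomp hhom,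
    strongSemilatticeOp_contract Fa φ hid hcomp hhom, hFa]

end StrongSemilattice

end NaryBand

open NaryBand

/-- A strong `n`-ary semilattice of `n`-ary semigroups is an
`n`-ary semigroup: given a semilattice `(Y,∧)`, nonempty sets `X_α`, associative
`n`-ary operations `F_α`, and structure maps `φ_{α,β}` (identity at `α = α`,
compatible along `α ≥ β ≥ γ`, homomorphisms for `α ≥ β`), the operation `F` on the
disjoint union defined by
`F(x₁,…,xₙ) = F_α(φ_{α₁,α}(x₁),…,φ_{αₙ,α}(xₙ))` with `α = α₁ ∧ ⋯ ∧ αₙ` is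
associative. -/
theorem stmt_14 {Y : Type*} {Xf : Y → Type*} {n : ℕ} (hn : 2 ≤ n)
    (meet : Y → Y → Y)
    (hassoc : ∀ a b c, meet (meet a b) c = meet a (meet b c))
    (hcomm : ∀ a b, meet a b = meet b a)
    (hidem : ∀ a, meet a a = a)
    (Fa : ∀ α, (Fin n → Xf α) → Xf α)
    (hFa : ∀ α, NAssoc hn (Fa α))
    (φ : ∀ α β, Xf α → Xf β)
    (hid : ∀ α, φ α α = id)
    (hcomp : ∀ α β γ, meet α β = β → meet β γ = γ → φ β γ ∘ φ α β = φ α γ)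
    (hhom : ∀ α β, meet α β = β → ∀ xs : Fin n → Xf α,
      φ α β (Fa α xs) = Fa β (fun i => φ α β (xs i)))
    (F : (Fin n → Σ α, Xf α) → Σ α, Xf α)
    (hFdef : ∀ xs : Fin n → Σ α, Xf α,
      F xs = ⟨nExt (show 1 ≤ n by omega) meet (fun i => (xs i).1),
        Fa _ (fun i => φ (xs i).1 _ (xs i).2)⟩) :
    NAssoc hn F := by
  let : Min Y := ⟨meet⟩
  -- in this order `β ≤ α` unfolds to `meet α β = β`, so `hcomp` and `hhom` apply unchanged
  let : SemilatticeInf Y := SemilatticeInf.mk' hcomm hassoc hidem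
  obtain rfl : F = strongSemilatticeOp Fa φ (by omega) := funext hFdef
  exact nAssoc_strongSemilatticeOp Fa φ hid hcomp hhom hn hFa
end
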